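/- Let f(x) = a₀ + a₁x + a₂x² + ... be a formal power series over ℤ with a₀ = 1, and let A be the lower-triangular Toeplitz matrix of the series 1 − x·f(x), i.e. A(n,n) = 1, A(n,k) = −a_{n−k−1} for k < n. Then the production matrix of M = A⁻¹ satisfies: (P_M)(n, n+1) = 1, (P_M)(n, 0) = a_n for all n ≥ 0, and (P_M)(n, k) = 0 for 1 ≤ k ≤ n. -/
import Mathlib


/-- Row-finite product of integer matrices indexed by ℕ × ℕ: all matrices in play
have row `n` supported in `{0, ..., n+1}`, so the truncated sum is exact. -/
def matMul (A B : ℕ → ℕ → ℤ) : ℕ → ℕ → ℤ :=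
  fun n k => ∑ j ∈ Finset.range (n + 2), A n j * B j k

/-- The shift matrix `U`. -/
def shiftU : ℕ → ℕ → ℤ := fun i j => if j = i + 1 then 1 else 0

/-- The identity matrix. -/
def matI : ℕ → ℕ → ℤ := fun i j => if i = j then 1 else 0

/-- The lower-triangular Toeplitz matrix of the series `1 − x·f(x)` where
`f(x) = a₀ + a₁x + ⋯`: unit diagonal, and entry `−a_{n−k−1}` for `k < n`. -/
def toeplitzOneSubXF (a : ℕ → ℤ) : ℕ → ℕ → ℤ :=
  fun n k => if k = n then 1 else if k < n then -a (n - k - 1) else 0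

lemma sumAU (a : ℕ → ℤ) (N : ℕ → ℕ → ℤ) (n k : ℕ) :
    matMul (matMul (toeplitzOneSubXF a) shiftU) N n k
      = ∑ i ∈ Finset.range (n + 1), toeplitzOneSubXF a n i * N (i + 1) k := by
  unfold matMul
  rw [Finset.sum_range_succ']
  have h0 : (∑ j ∈ Finset.range (n + 2), toeplitzOneSubXF a n j * shiftU j 0) * N 0 k = 0 := by
    have : ∀ j ∈ Finset.range (n + 2), toeplitzOneSubXF a n j * shiftU j 0 = 0 := by
      intro j _; simp [shiftU]
    rw [Finset.sum_congr rfl this]; simp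
  rw [h0, add_zero]
  apply Finset.sum_congr rfl
  intro i hi
  have hi' : i < n + 1 := Finset.mem_range.mp hi
  have : (∑ j ∈ Finset.range (n + 2), toeplitzOneSubXF a n j * shiftU j (i + 1))
      = toeplitzOneSubXF a n i := by
    rw [Finset.sum_eq_single i]
    · simp [shiftU]
    · intro b _ hb
      rw [show shiftU b (i + 1) = 0 from if_neg (by omega), mul_zero]
    · intro h; exact absurd (Finset.mem_range.mpr (by omega)) h
  rw [this]

lemma Nrec (a : ℕ → ℤ) (N : ℕ → ℕ → ℤ)
    (hAN : ∀ n k, matMul (toeplitzOneSubXF a) N n k = matI n k) (n k : ℕ) :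
    N (n + 1) k = matI (n + 1) k + ∑ i ∈ Finset.range (n + 1), a (n - i) * N i k := by
  have h := hAN (n + 1) k
  unfold matMul at h
  rw [Finset.sum_range_succ, Finset.sum_range_succ] at h
  have h1 : toeplitzOneSubXF a (n + 1) (n + 2) = 0 := by
    simp [toeplitzOneSubXF]
  have h2 : toeplitzOneSubXF a (n + 1) (n + 1) = 1 := by
    simp [toeplitzOneSubXF]
  rw [h1, h2] at h
  have h3 : ∀ i ∈ Finset.range (n + 1),
      toeplitzOneSubXF a (n + 1) i * N i k = -(a (n - i) * N i k) := by
    intro i hi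
    have hi' : i < n + 1 := Finset.mem_range.mp hi
    have : toeplitzOneSubXF a (n + 1) i = -a (n - i) := by
      simp only [toeplitzOneSubXF]
      rw [if_neg (by omega), if_pos (by omega), show n + 1 - i - 1 = n - i from by omega]
    rw [this]; ring
  rw [Finset.sum_congr rfl h3, Finset.sum_neg_distrib] at h
  linarith [h]

lemma key (a : ℕ → ℤ) (N : ℕ → ℕ → ℤ)
    (hAN : ∀ n k, matMul (toeplitzOneSubXF a) N n k = matI n k) (n k : ℕ) :
    matMul (matMul (toeplitzOneSubXF a) shiftU) N n k
      = matI (n + 1) k + a n * N 0 k := by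
  rw [sumAU]
  rw [Finset.sum_range_succ]
  have hd : toeplitzOneSubXF a n n = 1 := by simp [toeplitzOneSubXF]
  rw [hd, one_mul, Nrec a N hAN]
  have h3 : ∀ i ∈ Finset.range n,
      toeplitzOneSubXF a n i * N (i + 1) k = -(a (n - (i+1)) * N (i+1) k) := by
    intro i hi
    have hi' : i < n := Finset.mem_range.mp hi
    have : toeplitzOneSubXF a n i = -a (n - (i+1)) := by
      simp only [toeplitzOneSubXF]
      rw [if_neg (by omega), if_pos (by omega), show n - i - 1 = n - (i + 1) from by omega]
    rw [this]; ring
  rw [Finset.sum_congr rfl h3, Finset.sum_neg_distrib]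
  have h4 : ∑ i ∈ Finset.range (n + 1), a (n - i) * N i k
      = (∑ i ∈ Finset.range n, a (n - (i+1)) * N (i+1) k) + a (n - 0) * N 0 k := by
    rw [Finset.sum_range_succ']
  rw [h4]
  simp only [Nat.sub_zero]
  ring

lemma N00 (a : ℕ → ℤ) (N : ℕ → ℕ → ℤ)
    (hAN : ∀ n k, matMul (toeplitzOneSubXF a) N n k = matI n k) : N 0 0 = 1 := by
  have h := hAN 0 0
  unfold matMul matI at h
  simp [Finset.sum_range_succ, toeplitzOneSubXF] at h
  exact h

/-- For `A` the Toeplitz matrix of `1 − x f(x)` with `a₀ = 1` and `M = A⁻¹`, the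
production matrix `P_M = A·U·A⁻¹` has `P_M(n,n+1) = 1`, `P_M(n,0) = aₙ`, and
`P_M(n,k) = 0` for `1 ≤ k ≤ n`. -/
theorem production_matrix_one_sub_xf
    (a : ℕ → ℤ) (ha : a 0 = 1)
    (N : ℕ → ℕ → ℤ) (hNlt : ∀ n k, n < k → N n k = 0)
    (hAN : ∀ n k, matMul (toeplitzOneSubXF a) N n k = matI n k)
    (hNA : ∀ n k, matMul N (toeplitzOneSubXF a) n k = matI n k) :
    (∀ n, matMul (matMul (toeplitzOneSubXF a) shiftU) N n (n + 1) = 1) ∧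
    (∀ n, matMul (matMul (toeplitzOneSubXF a) shiftU) N n 0 = a n) ∧
    (∀ n k, 1 ≤ k → k ≤ n → matMul (matMul (toeplitzOneSubXF a) shiftU) N n k = 0) := by
  refine ⟨fun n => ?_, fun n => ?_, fun n k hk1 hk2 => ?_⟩
  · rw [key a N hAN, hNlt 0 (n+1) (by omega)]
    simp [matI]
  · rw [key a N hAN, N00 a N hAN]
    simp [matI]
  · rw [key a N hAN, hNlt 0 k (by omega)]
    simp [matI]; omega
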